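/- For n = 3 the quantum upper bound is attained: the maximum over unit vectors v₁, v₂, v₃ ∈ ℝ³ and encodings r : {0,1}³ → ℝ³ with ‖r x‖ ≤ 1 of the average success probability (1/(2³·3)) · Σ_{x ∈ {0,1}³} Σ_{i < 3} (1 + (−1)^{x i} · ⟨v i, r x⟩)/2 equals 1/2 + 1/(2√3), and it is attained by the standard orthonormal basis vectors v₁ = (1,0,0), v₂ = (0,1,0), v₃ = (0,0,1) with r x = ((−1)^{x₁}, (−1)^{x₂}, (−1)^{x₃})/√3. -/

import Mathlib

open scoped RealInnerProductSpace
open Finset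

/-- The average success probability, in the Bloch-vector formulation, of the pure
`n ↦ 1` quantum random access code with measurement vectors `v` and encoding `r`. -/
noncomputable def avgProb (n : ℕ) (v : Fin n → EuclideanSpace ℝ (Fin 3))
    (r : (Fin n → Bool) → EuclideanSpace ℝ (Fin 3)) : ℝ :=
  (1 / ((2 : ℝ) ^ n * n)) *
    ∑ x : Fin n → Bool, ∑ i : Fin n,
      (1 + (if x i then (-1 : ℝ) else 1) * ⟪v i, r x⟫) / 2

/-!
Write `ε_x(i) = (-1)^{x i}` and `w_x = Σ_i ε_x(i) v_i`; the average success probability is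
`1/2 + Σ_x ⟪w_x, r x⟫ / (2^{n+1} n)`. Since `Σ_x ε_x(i) ε_x(j) = 2^n δ_{ij}`, the vectors `w_x`
satisfy `Σ_x ‖w_x‖² = 2^n Σ_i ‖v_i‖² ≤ 2^n n`, so Cauchy–Schwarz, once in `ℝ³` and once over `x`,
gives `Σ_x ⟪w_x, r x⟫ ≤ Σ_x ‖w_x‖ ≤ 2^n √n`, i.e. the bound `1/2 + 1/(2√n)`.
For `n = 3` the standard basis with `r x = w_x / √3` makes every step an equality.
-/

section Signs

variable {ι : Type*} [Fintype ι]

def boolSign (b : Bool) : ℝ := if b then -1 else 1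

lemma boolSign_mul_self (b : Bool) : boolSign b * boolSign b = 1 := by
  cases b <;> norm_num [boolSign]

lemma boolSign_not (b : Bool) : boolSign (!b) = -boolSign b := by
  cases b <;> norm_num [boolSign]

lemma sum_boolSign_mul_boolSign_of_ne [DecidableEq ι] {i j : ι} (hij : i ≠ j) :
    ∑ x : ι → Bool, boolSign (x i) * boolSign (x j) = 0 := by
  -- flipping the bit `x j` is a bijection that negates every summand
  have hflip : Function.Involutive fun x : ι → Bool => Function.update x j (!x j) := by
    intro x
    funext k
    by_cases hk : k = j <;> simp [hk]
  have h := Equiv.sum_comp hflip.toPerm fun x => boolSign (x i) * boolSign (x j)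
  simp only [Function.Involutive.coe_toPerm, Function.update_self, Function.update_of_ne hij,
    boolSign_not, mul_neg, sum_neg_distrib] at h
  linarith

lemma sum_boolSign_mul_boolSign [DecidableEq ι] (i j : ι) :
    ∑ x : ι → Bool, boolSign (x i) * boolSign (x j)
      = if i = j then 2 ^ Fintype.card ι else 0 := by
  split_ifs with hij
  · subst hij
    simp [boolSign_mul_self]
  · exact sum_boolSign_mul_boolSign_of_ne hij

end Signs

section SignedSums

variable {ι E : Type*} [Fintype ι] [NormedAddCommGroup E] [InnerProductSpace ℝ E]

def signedSum (v : ι → E) (x : ι → Bool) : E := ∑ i, boolSign (x i) • v i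

lemma inner_signedSum_left (v : ι → E) (x : ι → Bool) (y : E) :
    ⟪signedSum v x, y⟫ = ∑ i, boolSign (x i) * ⟪v i, y⟫ := by
  simp only [signedSum, sum_inner, real_inner_smul_left]

lemma sum_norm_sq_signedSum [DecidableEq ι] (v : ι → E) :
    ∑ x : ι → Bool, ‖signedSum v x‖ ^ 2 = 2 ^ Fintype.card ι * ∑ i, ‖v i‖ ^ 2 := by
  calc ∑ x : ι → Bool, ‖signedSum v x‖ ^ 2
      = ∑ x : ι → Bool, ∑ i, ∑ j, boolSign (x i) * boolSign (x j) * ⟪v i, v j⟫ := by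
        refine sum_congr rfl fun x _ => ?_
        rw [← real_inner_self_eq_norm_sq, signedSum, sum_inner]
        simp only [inner_sum, real_inner_smul_left, real_inner_smul_right]
        exact sum_congr rfl fun i _ => sum_congr rfl fun j _ => by ring
    _ = ∑ i, ∑ j, (∑ x : ι → Bool, boolSign (x i) * boolSign (x j)) * ⟪v i, v j⟫ := by
        simp only [sum_mul]
        rw [sum_comm]
        exact sum_congr rfl fun i _ => sum_comm
    _ = 2 ^ Fintype.card ι * ∑ i, ‖v i‖ ^ 2 := by
        simp [sum_boolSign_mul_boolSign, mul_sum]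

lemma sum_norm_signedSum_le [DecidableEq ι] (v : ι → E) (hv : ∀ i, ‖v i‖ ≤ 1) :
    ∑ x : ι → Bool, ‖signedSum v x‖ ≤ 2 ^ Fintype.card ι * √(Fintype.card ι) := by
  have hsq : ∑ i, ‖v i‖ ^ 2 ≤ Fintype.card ι :=
    calc ∑ i, ‖v i‖ ^ 2 ≤ ∑ _i : ι, (1 : ℝ) :=
          sum_le_sum fun i _ => pow_le_one₀ (norm_nonneg (v i)) (hv i)
      _ = Fintype.card ι := by simp
  have hcs :=
    sq_sum_le_card_mul_sum_sq (s := univ) (f := fun x : ι → Bool => ‖signedSum v x‖)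
  rw [sum_norm_sq_signedSum, card_univ, Fintype.card_fun, Fintype.card_bool] at hcs
  refine le_of_sq_le_sq ?_ (by positivity)
  calc (∑ x : ι → Bool, ‖signedSum v x‖) ^ 2
      ≤ 2 ^ Fintype.card ι * (2 ^ Fintype.card ι * ∑ i, ‖v i‖ ^ 2) := mod_cast hcs
    _ ≤ 2 ^ Fintype.card ι * (2 ^ Fintype.card ι * Fintype.card ι) := by gcongr
    _ = (2 ^ Fintype.card ι * √(Fintype.card ι)) ^ 2 := by
        rw [mul_pow, Real.sq_sqrt (Nat.cast_nonneg _)]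
        ring

end SignedSums

section AvgProb

variable {n : ℕ} (v : Fin n → EuclideanSpace ℝ (Fin 3))
  (r : (Fin n → Bool) → EuclideanSpace ℝ (Fin 3))

lemma avgProb_eq_half_add (hn : n ≠ 0) :
    avgProb n v r = 1 / 2 + (∑ x, ⟪signedSum v x, r x⟫) / (2 ^ (n + 1) * n) := by
  have hsum : ∑ x : Fin n → Bool, ∑ i, (1 + boolSign (x i) * ⟪v i, r x⟫) / 2
      = 2 ^ n * n / 2 + (∑ x, ⟪signedSum v x, r x⟫) / 2 := by
    simp [inner_signedSum_left, add_div, sum_add_distrib, ← sum_div]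
    ring
  simp only [boolSign] at hsum
  rw [avgProb, hsum]
  field_simp
  ring

theorem avgProb_le (hn : n ≠ 0) (hv : ∀ i, ‖v i‖ ≤ 1) (hr : ∀ x, ‖r x‖ ≤ 1) :
    avgProb n v r ≤ 1 / 2 + 1 / (2 * √n) := by
  rw [avgProb_eq_half_add v r hn, add_le_add_iff_left, div_le_iff₀ (by positivity)]
  calc ∑ x, ⟪signedSum v x, r x⟫ ≤ ∑ x, ‖signedSum v x‖ :=
        sum_le_sum fun x _ => (real_inner_le_norm _ _).trans
          (mul_le_of_le_one_right (norm_nonneg _) (hr x))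
    _ ≤ 2 ^ n * √n := by simpa using sum_norm_signedSum_le v hv
    _ = 1 / (2 * √n) * (2 ^ (n + 1) * n) := by
        field_simp
        rw [Real.sq_sqrt (Nat.cast_nonneg n)]
        ring

lemma avgProb_eq_of_forall_mul_inner_eq (hn : n ≠ 0) {c : ℝ}
    (h : ∀ x i, boolSign (x i) * ⟪v i, r x⟫ = c) : avgProb n v r = (1 + c) / 2 := by
  simp only [avgProb_eq_half_add v r hn, inner_signedSum_left, h, sum_const, card_univ,
    Fintype.card_fun, Fintype.card_bool, Fintype.card_fin, nsmul_eq_mul]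
  field_simp
  push_cast
  ring

end AvgProb

lemma norm_toLp_boolSign_div_sqrt {n : ℕ} (hn : n ≠ 0) (x : Fin n → Bool) :
    ‖WithLp.toLp 2 fun i => boolSign (x i) / √n‖ = 1 := by
  have hsq : ∀ i, ‖boolSign (x i) / √n‖ ^ 2 = 1 / n := fun i => by
    rw [Real.norm_eq_abs, sq_abs, div_pow, Real.sq_sqrt (Nat.cast_nonneg n), sq,
      boolSign_mul_self]
  rw [EuclideanSpace.norm_eq]
  simp only [hsq, sum_const, card_univ, Fintype.card_fin, nsmul_eq_mul]
  field_simp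
  simp

lemma avgProb_single_toLp_boolSign_div_sqrt :
    avgProb 3 (fun i => EuclideanSpace.single i 1)
      (fun x => WithLp.toLp 2 fun i => boolSign (x i) / √3) = 1 / 2 + 1 / (2 * √3) := by
  rw [avgProb_eq_of_forall_mul_inner_eq _ _ three_ne_zero (c := 1 / √3)]
  · ring
  · intro x i
    rw [EuclideanSpace.inner_single_left, PiLp.toLp_apply, map_one, one_mul, mul_div_assoc',
      boolSign_mul_self]

/-- For `n = 3` the quantum upper bound `1/2 + 1/(2√3)` is the maximum of the average
success probability, and it is attained by the standard basis vectors with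
`r x = ((−1)^{x₁}, (−1)^{x₂}, (−1)^{x₃})/√3`. -/
theorem stmt14 :
    IsGreatest
      {p : ℝ | ∃ (v : Fin 3 → EuclideanSpace ℝ (Fin 3))
        (r : (Fin 3 → Bool) → EuclideanSpace ℝ (Fin 3)),
        (∀ i, ‖v i‖ = 1) ∧ (∀ x, ‖r x‖ ≤ 1) ∧ p = avgProb 3 v r}
      (1 / 2 + 1 / (2 * Real.sqrt 3)) ∧
    avgProb 3
      ![EuclideanSpace.single 0 1, EuclideanSpace.single 1 1, EuclideanSpace.single 2 1]
      (fun x => (WithLp.equiv 2 (Fin 3 → ℝ)).symm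
        ![(if x 0 then (-1 : ℝ) else 1) / Real.sqrt 3,
          (if x 1 then (-1 : ℝ) else 1) / Real.sqrt 3,
          (if x 2 then (-1 : ℝ) else 1) / Real.sqrt 3])
      = 1 / 2 + 1 / (2 * Real.sqrt 3) := by
  have hv₀ : ![EuclideanSpace.single 0 1, EuclideanSpace.single 1 1, EuclideanSpace.single 2 1]
      = fun i : Fin 3 => EuclideanSpace.single i (1 : ℝ) := by
    funext i
    fin_cases i <;> rfl
  have hr₀ : (fun x : Fin 3 → Bool => (WithLp.equiv 2 (Fin 3 → ℝ)).symm
        ![(if x 0 then (-1 : ℝ) else 1) / Real.sqrt 3,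
          (if x 1 then (-1 : ℝ) else 1) / Real.sqrt 3,
          (if x 2 then (-1 : ℝ) else 1) / Real.sqrt 3])
      = fun x => WithLp.toLp 2 fun i => boolSign (x i) / √3 := by
    funext x
    ext i
    fin_cases i <;> simp [boolSign]
  rw [hv₀, hr₀]
  have hval := avgProb_single_toLp_boolSign_div_sqrt
  refine ⟨⟨⟨_, _, fun i => by simp, fun x => ?_, hval.symm⟩, ?_⟩, hval⟩
  · simpa using (norm_toLp_boolSign_div_sqrt three_ne_zero x).le
  · rintro p ⟨v, r, hv, hr, rfl⟩
    simpa using avgProb_le v r three_ne_zero (fun i => (hv i).le) hr
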